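/- Let M→N be a matroid perspective on a finite linearly ordered ground set E. Let B ⊆ E be independent in M and spanning in N, and let A ⊆ E satisfy B∖Int_N(B) ⊆ A ⊆ B∪Ext_M(B). Then r_M(A) − r_N(A) = r_M(B) − r_N(B). -/

import Mathlib

/-- A circuit of a matroid: a minimal dependent set. -/
def Matroid.IsCircuit' {α : Type*} (M : Matroid α) (C : Set α) : Prop :=
  M.Dep C ∧ ∀ D, M.Dep D → D ⊆ C → D = C

/-- A cocircuit of a matroid: a circuit of the dual matroid. -/
def Matroid.IsCocircuit' {α : Type*} (M : Matroid α) (C : Set α) : Prop :=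
  M✶.IsCircuit' C

/-- The rank of a set in a matroid: the largest cardinality of an independent subset. -/
noncomputable def Matroid.rk' {α : Type*} (M : Matroid α) (A : Set α) : ℕ :=
  sSup {n : ℕ | ∃ I, I ⊆ A ∧ M.Indep I ∧ I.ncard = n}

/-- `e` is the minimum element of the set `C`. -/
def IsMinOf {α : Type*} [LinearOrder α] (C : Set α) (e : α) : Prop :=
  e ∈ C ∧ ∀ x ∈ C, e ≤ x

/-- `Int_M(A)`: internally active elements of `A` w.r.t. `M`
(the ground set is the whole type, so `E ∖ A = Aᶜ`). -/
def IntSet {α : Type*} [LinearOrder α] (M : Matroid α) (A : Set α) : Set α :=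
  {e | e ∈ A ∧ ∃ C, M.IsCocircuit' C ∧ C ⊆ Aᶜ ∪ {e} ∧ IsMinOf C e}

/-- `Ext_M(A)`: externally active elements w.r.t. `M`. -/
def ExtSet {α : Type*} [LinearOrder α] (M : Matroid α) (A : Set α) : Set α :=
  {e | e ∉ A ∧ ∃ C, M.IsCircuit' C ∧ C ⊆ A ∪ {e} ∧ IsMinOf C e}

/-- `P_M(A)`: smallest elements of cocircuits of `M` contained in `E ∖ A`. -/
def PActSet {α : Type*} [LinearOrder α] (M : Matroid α) (A : Set α) : Set α :=
  {e | e ∉ A ∧ ∃ C, M.IsCocircuit' C ∧ C ⊆ Aᶜ ∧ IsMinOf C e}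

/-- `Q_M(A)`: smallest elements of circuits of `M` contained in `A`. -/
def QActSet {α : Type*} [LinearOrder α] (M : Matroid α) (A : Set α) : Set α :=
  {e | e ∈ A ∧ ∃ C, M.IsCircuit' C ∧ C ⊆ A ∧ IsMinOf C e}

/-!
Put `X = B \ A`; every `x ∈ X` is internally active in `N`. The `N`-cocircuit witnessing
this meets `B` only in `x`, so `x ∉ cl_N (B \ {x})`. Every `a ∈ A \ B` is externally active
in `M`, and its `M`-circuit `C ⊆ B ∪ {a}` avoids `X`: for `c ∈ C ∩ X` the `N`-cocircuit `K`
witnessing `c ∈ Int_N(B)` cannot contain `a` (else `c = min K ≤ a = min C ≤ c`), so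
`C ∩ K = {c}`, which is impossible in a perspective. Hence `B ∩ A` is an `M`-basis of `A`.
Since `cl_M ⊆ cl_N`, an `N`-basis `J` of `B ∩ A` is one of `A`, while `J ∪ X` is an `N`-basis
of `B`, so both sides equal `|B ∩ A| - |J|`.
-/

open Set

namespace Matroid

variable {α : Type*} {M N : Matroid α} {A B C I J K : Set α} {e : α}

lemma isCircuit'_iff : M.IsCircuit' C ↔ M.IsCircuit C := by
  simp only [IsCircuit', isCircuit_def, minimal_subset_iff, eq_comm (a := C)]

lemma isCocircuit'_iff : M.IsCocircuit' K ↔ M.IsCocircuit K :=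
  isCircuit'_iff

lemma IsBasis.rk'_eq_ncard [M.RankFinite] (hI : M.IsBasis I A) : M.rk' A = I.ncard := by
  refine IsGreatest.csSup_eq ⟨⟨I, hI.subset, hI.indep, rfl⟩, ?_⟩
  rintro _ ⟨J, hJA, hJ, rfl⟩
  have hle : J.encard ≤ I.encard := by
    rw [← hJ.eRk_eq_encard, ← hI.eRk_eq_encard]
    exact M.eRk_mono hJA
  rwa [← hJ.finite.cast_ncard_eq, ← hI.indep.finite.cast_ncard_eq, Nat.cast_le] at hle

lemma closure_subset_closure_of_forall_isFlat (hE : M.E = N.E)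
    (hMN : ∀ F, N.IsFlat F → M.IsFlat F) (X : Set α) : M.closure X ⊆ N.closure X := by
  have hflat : M.IsFlat (N.closure X) := hMN _ (N.isFlat_closure X)
  rw [← closure_inter_ground, ← hflat.closure]
  exact M.closure_subset_closure (hE ▸ N.inter_ground_subset_closure X)

lemma IsCircuit.inter_isCocircuit_ne_singleton_of_forall_isFlat (hE : M.E = N.E)
    (hMN : ∀ F, N.IsFlat F → M.IsFlat F) (hC : M.IsCircuit C) (hK : N.IsCocircuit K) :
    C ∩ K ≠ {e} := by
  intro hCK
  -- `e ∈ cl_M (C \ {e}) ⊆ cl_N (C \ {e})` gives an `N`-circuit through `e` inside `C`.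
  have heC : e ∈ C := (hCK.symm.subset rfl).1
  have hecl := closure_subset_closure_of_forall_isFlat hE hMN _
    (hC.mem_closure_sdiff_singleton_of_mem heC)
  obtain ⟨C', hC'C, hC', heC'⟩ := N.exists_isCircuit_of_mem_closure hecl (by simp)
  rw [insert_sdiff_singleton, insert_eq_of_mem heC] at hC'C
  refine hC'.inter_isCocircuit_ne_singleton hK (e := e) (Subset.antisymm ?_ ?_)
  · exact hCK ▸ inter_subset_inter_left K hC'C
  · exact singleton_subset_iff.2 ⟨heC', (hCK.symm.subset rfl).2⟩

lemma mem_closure_inter_of_mem_extSet [LinearOrder α] (hE : M.E = N.E)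
    (hMN : ∀ F, N.IsFlat F → M.IsFlat F) (he : e ∈ ExtSet M B)
    (hInt : B \ A ⊆ IntSet N B) : e ∈ M.closure (B ∩ A) := by
  obtain ⟨heB, C, hC, hCB, heC, heCmin⟩ := he
  replace hC := isCircuit'_iff.1 hC
  refine M.closure_subset_closure ?_ (hC.mem_closure_sdiff_singleton_of_mem heC)
  rintro c ⟨hcC, hce⟩
  have hcB : c ∈ B := (hCB hcC).resolve_right hce
  refine ⟨hcB, by_contra fun hcA ↦ ?_⟩
  obtain ⟨-, K, hK, hKB, hcK, hcKmin⟩ := hInt ⟨hcB, hcA⟩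
  refine hC.inter_isCocircuit_ne_singleton_of_forall_isFlat hE hMN (isCocircuit'_iff.1 hK)
    (e := c) (Subset.antisymm ?_ (singleton_subset_iff.2 ⟨hcC, hcK⟩))
  rintro t ⟨htC, htK⟩
  refine (hKB htK).resolve_left fun htB ↦ ?_
  obtain rfl : t = e := (hCB htC).resolve_left htB
  exact heB (le_antisymm (heCmin c hcC) (hcKmin t htK) ▸ hcB)

lemma notMem_closure_sdiff_singleton_of_mem_intSet [LinearOrder α] (he : e ∈ IntSet N B) :
    e ∉ N.closure (B \ {e}) := by
  obtain ⟨heB, K, hK, hKB, heK, -⟩ := he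
  intro hecl
  obtain ⟨C, hCB, hC, heC⟩ := N.exists_isCircuit_of_mem_closure hecl (by simp)
  rw [insert_sdiff_singleton, insert_eq_of_mem heB] at hCB
  refine hC.inter_isCocircuit_ne_singleton (isCocircuit'_iff.1 hK) (e := e)
    (Subset.antisymm ?_ (singleton_subset_iff.2 ⟨heC, heK⟩))
  rintro t ⟨htC, htK⟩
  exact (hKB htK).resolve_left (not_not.2 (hCB htC))

lemma IsBasis.union_sdiff_isBasis (hJ : N.IsBasis J (B ∩ A)) (hBE : B ⊆ N.E)
    (hB : ∀ x ∈ B \ A, x ∉ N.closure (B \ {x})) : N.IsBasis (J ∪ (B \ A)) B := by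
  have hJB : J ⊆ B := hJ.subset.trans inter_subset_left
  have hX : N.Indep (B \ A) := (indep_iff_forall_notMem_closure_sdiff (sdiff_subset.trans hBE)).2
    fun x hx hcl ↦ hB x hx (N.closure_subset_closure (sdiff_subset_sdiff_left sdiff_subset) hcl)
  have hJX : N.Indep (J ∪ (B \ A)) := (hJ.indep.union_indep_iff_forall_notMem_closure_right hX).2
    fun x hx hcl ↦ hB x hx.1 <| N.closure_subset_closure
      (union_subset (subset_sdiff_singleton hJB hx.2) (sdiff_subset_sdiff_left sdiff_subset)) hcl
  refine hJX.isBasis_of_subset_of_subset_closure (union_subset hJB sdiff_subset) ?_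
  intro b hbB
  by_cases hbA : b ∈ A
  · exact N.closure_subset_closure subset_union_left (hJ.subset_closure ⟨hbB, hbA⟩)
  · exact N.mem_closure_of_mem (Or.inr ⟨hbB, hbA⟩)
      (union_subset hJ.indep.subset_ground (sdiff_subset.trans hBE))

end Matroid

theorem stmt1_general {α : Type*} [Fintype α] [LinearOrder α] (M N : Matroid α)
    (hME : M.E = Set.univ) (hNE : N.E = Set.univ)
    (hMN : ∀ F, N.IsFlat F → M.IsFlat F)
    (B : Set α) (hBi : M.Indep B)
    (A : Set α) (h1 : B \ IntSet N B ⊆ A) (h2 : A ⊆ B ∪ ExtSet M B) :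
    (M.rk' A : ℤ) - (N.rk' A : ℤ) = (M.rk' B : ℤ) - (N.rk' B : ℤ) := by
  have hE : M.E = N.E := hME.trans hNE.symm
  have hInt : B \ A ⊆ IntSet N B := fun x hx ↦ by_contra fun hx' ↦ hx.2 (h1 ⟨hx.1, hx'⟩)
  have hMA : M.IsBasis (B ∩ A) A := by
    refine (hBi.subset inter_subset_left).isBasis_of_subset_of_subset_closure
      inter_subset_right fun a ha ↦ ?_
    by_cases haB : a ∈ B
    · exact M.mem_closure_of_mem' ⟨haB, ha⟩ (hME ▸ mem_univ a)
    · exact Matroid.mem_closure_inter_of_mem_extSet hE hMN ((h2 ha).resolve_left haB) hInt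
  obtain ⟨J, hJ⟩ := N.exists_isBasis (B ∩ A) (hNE ▸ subset_univ _)
  have hNA : N.IsBasis J A :=
    hJ.indep.isBasis_of_subset_of_subset_closure (hJ.subset.trans inter_subset_right) <|
      hJ.closure_eq_closure ▸
        hMA.subset_closure.trans (Matroid.closure_subset_closure_of_forall_isFlat hE hMN _)
  have hNB : N.IsBasis (J ∪ (B \ A)) B := hJ.union_sdiff_isBasis (hNE ▸ subset_univ _)
    fun x hx ↦ Matroid.notMem_closure_sdiff_singleton_of_mem_intSet (hInt hx)
  have hJX : Disjoint J (B \ A) := disjoint_left.2 fun x hxJ hx ↦ hx.2 (hNA.subset hxJ)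
  rw [hMA.rk'_eq_ncard, hBi.isBasis_self.rk'_eq_ncard, hNA.rk'_eq_ncard, hNB.rk'_eq_ncard,
    ncard_union_eq hJX, ← ncard_inter_add_ncard_sdiff_eq_ncard B A]
  push_cast
  ring

/-- For a matroid perspective `M → N`, a set `B` independent in `M` and spanning in `N`,
and `A` in the interval `[B ∖ Int_N(B), B ∪ Ext_M(B)]`, we have
`r_M(A) − r_N(A) = r_M(B) − r_N(B)`. -/
theorem stmt1 {α : Type*} [Fintype α] [LinearOrder α] (M N : Matroid α)
    (hME : M.E = Set.univ) (hNE : N.E = Set.univ)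
    (hMN : ∀ F, N.IsFlat F → M.IsFlat F)
    (B : Set α) (hBi : M.Indep B) (hBs : N.Spanning B)
    (A : Set α) (h1 : B \ IntSet N B ⊆ A) (h2 : A ⊆ B ∪ ExtSet M B) :
    (M.rk' A : ℤ) - (N.rk' A : ℤ) = (M.rk' B : ℤ) - (N.rk' B : ℤ) :=
  stmt1_general M N hME hNE hMN B hBi A h1 h2
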